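/- arXiv:1809.10931 — 3 statements merged into one kernel-verified Lean document; each statement's English description precedes it below -/
import Mathlib

section
/- Let F be a field of prime order, let ω = e^{2πi/|F|}, and let P : F^n → F be a polynomial of degree d. Suppose there exist polynomials Q_1,...,Q_r : F^n → F of degree at most d−1 and a function f : F^r → F such that P = f(Q_1,...,Q_r). Then there exist α_1,...,α_r ∈ F such that the degree-(d−1) polynomial Q(x) = ∑_{i≤r} α_i Q_i(x) satisfies |E_{x∈F^n} ω^{P(x)} · conj(ω^{Q(x)})| ≥ |F|^{−r}. -/
/-!
With `ψ a = ω^a`, write `φ = ψ ∘ f` for the unimodular function on `G = F^r` and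
`S χ = ∑ₓ φ(q x) · conj χ(q x)` for its correlation along `q = (Q₁, …, Q_r)` with a character
`χ` of `G`. Orthogonality of characters gives `∑_χ (∑_y conj φ(y) · χ(y)) · S χ = |G| · |F^n|`,
and every coefficient `∑_y conj φ(y) · χ(y)` has norm at most `|G|`, so `∑_χ ‖S χ‖ ≥ |F^n|`:
one of the `|G|` characters has `‖S χ‖ ≥ |F^n| / |G|`. Every character of `F^r` is
`y ↦ ω^(α ⬝ᵥ y)`, and then `χ ∘ q = ω^Q` with `Q = ∑ αᵢ Qᵢ`.
-/

open Finset ComplexConjugate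

namespace AddChar

section Correlation

variable {G X : Type*} [AddCommGroup G] [Fintype G] [Fintype X]

lemma sum_dual_mul_correlation (φ : G → ℂ) (q : X → G) :
    ∑ χ : AddChar G ℂ, (∑ y, conj (φ y) * χ y) * ∑ x, φ (q x) * conj (χ (q x))
      = Fintype.card G * ∑ x, conj (φ (q x)) * φ (q x) := by
  classical
  have hχ (χ : AddChar G ℂ) (y z : G) : χ y * conj (χ z) = χ (y - z) := by
    rw [sub_eq_add_neg, map_add_eq_mul, map_neg_eq_conj]
  calc _ = ∑ y : G, ∑ x : X, conj (φ y) * φ (q x) * ∑ χ : AddChar G ℂ, χ (y - q x) := by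
        simp_rw [sum_mul_sum, mul_sum, ← hχ]
        rw [sum_comm_cycle, sum_comm_cycle]
        exact sum_congr rfl fun y _ => sum_congr rfl fun x _ => sum_congr rfl fun χ _ => by ring
    _ = _ := by
        rw [sum_comm]
        simp_rw [sum_apply_eq_ite, sub_eq_zero, mul_ite, mul_zero, sum_ite_eq', mem_univ,
          if_true, mul_sum]
        exact sum_congr rfl fun x _ => by ring

theorem exists_inv_card_le_norm_correlation [Nonempty X] (φ : G → ℂ) (hφ : ∀ y, ‖φ y‖ = 1)
    (q : X → G) :
    ∃ χ : AddChar G ℂ,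
      (Fintype.card G : ℝ)⁻¹ ≤ ‖(∑ x, φ (q x) * conj (χ (q x))) / Fintype.card X‖ := by
  set S : AddChar G ℂ → ℂ := fun χ => ∑ x, φ (q x) * conj (χ (q x))
  have hG : (0 : ℝ) < Fintype.card G := by exact_mod_cast Fintype.card_pos
  have hX : (0 : ℝ) < Fintype.card X := by exact_mod_cast Fintype.card_pos
  have hcoeff (χ : AddChar G ℂ) : ‖∑ y, conj (φ y) * χ y‖ ≤ Fintype.card G := by
    simpa using norm_sum_le_of_le univ fun y _ => (by simp [hφ] : ‖conj (φ y) * χ y‖ ≤ 1)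
  have hsum : (Fintype.card X : ℝ) ≤ ∑ χ, ‖S χ‖ := by
    refine le_of_mul_le_mul_left ?_ hG
    calc (Fintype.card G * Fintype.card X : ℝ)
        = ‖∑ χ : AddChar G ℂ, (∑ y, conj (φ y) * χ y) * S χ‖ := by
          simp [S, sum_dual_mul_correlation, Complex.conj_mul', hφ]
      _ ≤ ∑ χ : AddChar G ℂ, ‖∑ y, conj (φ y) * χ y‖ * ‖S χ‖ :=
          (norm_sum_le _ _).trans_eq (by simp only [norm_mul])
      _ ≤ ∑ χ : AddChar G ℂ, Fintype.card G * ‖S χ‖ := by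
          gcongr with χ; exact hcoeff χ
      _ = Fintype.card G * ∑ χ, ‖S χ‖ := (mul_sum _ _ _).symm
  have havg : ∑ _χ : AddChar G ℂ, (Fintype.card X / Fintype.card G : ℝ) = Fintype.card X := by
    rw [sum_const, card_univ, card_eq, nsmul_eq_mul]
    field_simp
  obtain ⟨χ, -, hχ⟩ := exists_le_of_sum_le univ_nonempty (havg.trans_le hsum)
  refine ⟨χ, ?_⟩
  rw [norm_div, Complex.norm_natCast, le_div_iff₀ hX, inv_mul_eq_div]
  exact hχ

end Correlation

section DotProduct

variable {R ι : Type*} [CommRing R] [Fintype ι]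

def dotProductChar (ψ : AddChar R ℂ) (α : ι → R) : AddChar (ι → R) ℂ where
  toFun y := ψ (α ⬝ᵥ y)
  map_zero_eq_one' := by simp
  map_add_eq_mul' y z := by rw [dotProduct_add, map_add_eq_mul]

@[simp]
lemma dotProductChar_apply (ψ : AddChar R ℂ) (α y : ι → R) :
    dotProductChar ψ α y = ψ (α ⬝ᵥ y) := rfl

lemma dotProductChar_injective {ψ : AddChar R ℂ} (hψ : ψ.IsPrimitive) :
    Function.Injective (dotProductChar ψ : (ι → R) → AddChar (ι → R) ℂ) := by
  classical
  intro α β h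
  funext i
  refine to_mulShift_inj_of_isPrimitive hψ (DFunLike.ext _ _ fun t => ?_)
  simpa using DFunLike.congr_fun h (Pi.single i t)

lemma dotProductChar_surjective [Fintype R] {ψ : AddChar R ℂ} (hψ : ψ.IsPrimitive) :
    Function.Surjective (dotProductChar ψ : (ι → R) → AddChar (ι → R) ℂ) := by
  classical
  exact ((Fintype.bijective_iff_injective_and_card _).2
    ⟨dotProductChar_injective hψ, card_eq.symm⟩).2

end DotProduct

end AddChar

theorem low_rank_implies_correlation_general
    (p : ℕ) [Fact p.Prime]
    (n r : ℕ) (P : MvPolynomial (Fin n) (ZMod p))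
    (Q : Fin r → MvPolynomial (Fin n) (ZMod p))
    (f : (Fin r → ZMod p) → ZMod p)
    (hf : ∀ x : Fin n → ZMod p,
      MvPolynomial.eval x P = f (fun i => MvPolynomial.eval x (Q i))) :
    ∃ α : Fin r → ZMod p,
      (p : ℝ) ^ (-(r : ℝ)) ≤ ‖
        ((∑ x : Fin n → ZMod p,
            Complex.exp (2 * Real.pi * Complex.I / p) ^ (MvPolynomial.eval x P).val *
              (starRingEnd ℂ)
                (Complex.exp (2 * Real.pi * Complex.I / p) ^
                  (MvPolynomial.eval x (∑ i, MvPolynomial.C (α i) * Q i)).val)) /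
          (Fintype.card (Fin n → ZMod p) : ℂ))‖ := by
  have : NeZero p := ⟨(Fact.out : p.Prime).ne_zero⟩
  have hζ := Complex.isPrimitiveRoot_exp p (NeZero.ne p)
  let ψ := AddChar.zmodChar p ((IsPrimitiveRoot.iff_def _ _).mp hζ).1
  obtain ⟨χ, hχ⟩ := AddChar.exists_inv_card_le_norm_correlation (fun y => ψ (f y))
    (fun _ => AddChar.norm_apply _ _) (fun x i => MvPolynomial.eval x (Q i))
  obtain ⟨α, rfl⟩ := AddChar.dotProductChar_surjective
    (AddChar.zmodChar_primitive_of_primitive_root p hζ) χ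
  refine ⟨α, ?_⟩
  have hcard : (Fintype.card (Fin r → ZMod p) : ℝ)⁻¹ = (p : ℝ) ^ (-(r : ℝ)) := by
    rw [Real.rpow_neg (Nat.cast_nonneg p), Real.rpow_natCast]
    simp
  have heval (x : Fin n → ZMod p) :
      MvPolynomial.eval x (∑ i, MvPolynomial.C (α i) * Q i) =
        α ⬝ᵥ fun i => MvPolynomial.eval x (Q i) := by
    simp [dotProduct]
  simpa only [← hcard, hf, heval, ψ, AddChar.dotProductChar_apply, AddChar.zmodChar_apply]
    using hχ

/-- If `F = ℤ/p` with `p` prime, `ω = e^{2πi/p}`, `P : F^n → F` is a polynomial of degree `d`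
which can be written as `P = f(Q₁,…,Q_r)` with each `Q_i` of degree at most `d-1`, then there
are `α₁,…,α_r ∈ F` such that the polynomial `Q = ∑ α_i Q_i` (of degree at most `d-1`)
satisfies `|𝔼_x ω^{P(x)} · conj(ω^{Q(x)})| ≥ p^{-r}`. -/
theorem low_rank_implies_correlation
    (p : ℕ) [Fact p.Prime]
    (n d r : ℕ) (P : MvPolynomial (Fin n) (ZMod p))
    (hdeg : P.totalDegree = d)
    (Q : Fin r → MvPolynomial (Fin n) (ZMod p))
    (hQdeg : ∀ i, (Q i).totalDegree ≤ d - 1)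
    (f : (Fin r → ZMod p) → ZMod p)
    (hf : ∀ x : Fin n → ZMod p,
      MvPolynomial.eval x P = f (fun i => MvPolynomial.eval x (Q i))) :
    ∃ α : Fin r → ZMod p,
      (p : ℝ) ^ (-(r : ℝ)) ≤ ‖
        ((∑ x : Fin n → ZMod p,
            Complex.exp (2 * Real.pi * Complex.I / p) ^ (MvPolynomial.eval x P).val *
              (starRingEnd ℂ)
                (Complex.exp (2 * Real.pi * Complex.I / p) ^
                  (MvPolynomial.eval x (∑ i, MvPolynomial.C (α i) * Q i)).val)) /
          (Fintype.card (Fin n → ZMod p) : ℂ))‖ :=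
  low_rank_implies_correlation_general p n r P Q f hf
end

section
/- Let F be a finite field, let B be the multiset {u_1⊗⋯⊗u_d : u_i ∈ F^{n_i}} in F^{n_1} ⊗ ⋯ ⊗ F^{n_d}, and let B' ⊆ B be a multiset with |B'| ≥ δ|B| for some δ > 0. Then there exists an f_1-system whose elements are chosen from f_2 B' − f_2 B', where f_1 = 16^d/δ² and f_2 = 4^d. -/
open Finset

/-- The space of `d`-dimensional arrays over `F` with coordinates indexed by `I ⊆ [d]`. -/
abbrev Arr (F : Type*) {d : ℕ} (n : Fin d → ℕ) (I : Finset (Fin d)) :=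
  ((i : {x : Fin d // x ∈ I}) → Fin (n i.1)) → F

/-- The rank-one array `u₁ ⊗ ⋯ ⊗ u_d`. -/
def tens {F : Type*} [Field F] {d : ℕ} {n : Fin d → ℕ}
    (u : (i : Fin d) → Fin (n i) → F) : Arr F n Finset.univ :=
  fun x => ∏ i : Fin d, u i (x ⟨i, Finset.mem_univ i⟩)

/-- The multiset `B = {u₁ ⊗ ⋯ ⊗ u_d : uᵢ ∈ F^{n_i}}`. -/
def bigB (F : Type*) [Field F] [Fintype F] {d : ℕ} (n : Fin d → ℕ) :
    Multiset (Arr F n Finset.univ) :=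
  (Finset.univ : Finset ((i : Fin d) → Fin (n i) → F)).val.map tens

/-- `g ∈ kB - lB`. -/
def InSumDiff {α : Type*} [AddCommGroup α] (B : Multiset α) (k l : ℕ) (g : α) : Prop :=
  ∃ (m m' : ℕ) (a : Fin m → α) (b : Fin m' → α),
    m ≤ k ∧ m' ≤ l ∧ (∀ i, a i ∈ B) ∧ (∀ i, b i ∈ B) ∧ g = ∑ i, a i - ∑ i, b i

/-- `T` is the set of tuples of an `l`-system. -/
def IsSystemTuples {F : Type*} [Field F] {d : ℕ} {n : Fin d → ℕ} (l : ℝ)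
    (T : Finset ((i : Fin d) → Fin (n i) → F)) : Prop :=
  ∃ U : (k : Fin d) → ((i : Fin d) → Fin (n i) → F) → Submodule F (Fin (n k) → F),
    (∀ k u v, (∀ j : Fin d, j < k → u j = v j) → U k u = U k v) ∧
    (∀ k u, (Module.finrank F (Fin (n k) → F) : ℝ) ≤ l + (Module.finrank F (U k u) : ℝ)) ∧
    (∀ u, u ∈ T ↔ ∀ k, u k ∈ U k u)

/-!
Induction on `d`, slicing along the first factor. If `B'` has density `δ`, the set `A` of first
factors whose slice has density at least `δ/2` has density at least `δ/2` in `F^{n₁}`. Bogolyubov's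
lemma yields a subspace `V` of codimension at most `4/δ²` inside `A + A - A - A`: the large spectrum
`{γ : |Â(γ)|² ≥ (δ/2)|A|²}` has at most `4/δ²` elements by Parseval, and on its annihilator the
fourth-moment count of `a + b - c - e = v` is positive. Writing `v = a + b - c - e`, the system for
the slice at `v` is the intersection of the four systems given by induction for the slices at
`a, b, c, e`, so codimensions add up to `4 · 16^{d-1}/(δ/2)² = 16^d/δ²`, and by linearity of
`v ⊗ w` in `v` each `v ⊗ w` is a signed sum of four elements of `4^{d-1}B' - 4^{d-1}B'`.
-/

section Fourier

variable {F ι : Type*} [Field F] [Fintype ι]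

def dotChar (ψ : AddChar F ℂ) (γ : ι → F) : AddChar (ι → F) ℂ :=
  ψ.compAddMonoidHom (.mk' (γ ⬝ᵥ ·) (dotProduct_add γ))

@[simp]
lemma dotChar_apply (ψ : AddChar F ℂ) (γ x : ι → F) : dotChar ψ γ x = ψ (γ ⬝ᵥ x) := rfl

lemma dotChar_comm (ψ : AddChar F ℂ) (γ x : ι → F) : dotChar ψ γ x = dotChar ψ x γ := by
  simp [dotProduct_comm]

lemma dotChar_eq_zero_iff {ψ : AddChar F ℂ} (hψ : ψ ≠ 0) {γ : ι → F} :
    dotChar ψ γ = 0 ↔ γ = 0 := by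
  classical
  refine ⟨fun h => ?_, fun h => by ext x; simp [h]⟩
  by_contra hγ
  obtain ⟨i, hi⟩ := Function.ne_iff.1 hγ
  obtain ⟨t, ht⟩ := AddChar.ne_zero_iff.1 hψ
  refine ht ?_
  have := DFunLike.congr_fun h (Pi.single i ((γ i)⁻¹ * t))
  simpa [dotProduct_single, mul_inv_cancel_left₀ hi] using this

def fourierSum (ψ : AddChar F ℂ) (A : Finset (ι → F)) (γ : ι → F) : ℂ :=
  ∑ a ∈ A, dotChar ψ γ a

variable [Fintype F]

lemma norm_fourierSum_sq (ψ : AddChar F ℂ) (A : Finset (ι → F)) (γ : ι → F) :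
    (‖fourierSum ψ A γ‖ : ℂ) ^ 2 = ∑ p ∈ A ×ˢ A, dotChar ψ γ (p.1 - p.2) := by
  rw [← Complex.mul_conj', fourierSum, map_sum, Finset.sum_mul_sum, Finset.sum_product]
  refine Finset.sum_congr rfl fun a _ => Finset.sum_congr rfl fun b _ => ?_
  rw [sub_eq_add_neg, AddChar.map_add_eq_mul, AddChar.map_neg_eq_conj]

variable [DecidableEq F] [DecidableEq ι] {ψ : AddChar F ℂ}

lemma sum_dotChar_apply (hψ : ψ ≠ 0) (x : ι → F) :
    ∑ γ, dotChar ψ γ x = if x = 0 then (Fintype.card (ι → F) : ℂ) else 0 := by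
  classical
  simp_rw [dotChar_comm ψ _ x]
  rw [AddChar.sum_eq_ite]
  simp only [dotChar_eq_zero_iff hψ]

lemma sum_sum_dotChar_eq_card (hψ : ψ ≠ 0) {β : Type*} (P : Finset β) (f : β → ι → F) :
    ∑ γ, ∑ p ∈ P, dotChar ψ γ (f p) = Fintype.card (ι → F) * #{p ∈ P | f p = 0} := by
  rw [Finset.sum_comm]
  simp only [sum_dotChar_apply hψ, Finset.sum_ite, Finset.sum_const, nsmul_eq_mul,
    zero_mul, add_zero, mul_comm]

lemma sum_norm_fourierSum_sq (hψ : ψ ≠ 0) (A : Finset (ι → F)) :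
    ∑ γ, ‖fourierSum ψ A γ‖ ^ 2 = Fintype.card (ι → F) * #A := by
  apply Complex.ofReal_injective
  push_cast
  simp_rw [norm_fourierSum_sq, sum_sum_dotChar_eq_card hψ, sub_eq_zero]
  rw [← Finset.diag_eq_filter, Finset.diag_card]

lemma sum_norm_fourierSum_pow_four_mul (hψ : ψ ≠ 0) (A : Finset (ι → F)) (x : ι → F) :
    ∑ γ, (‖fourierSum ψ A γ‖ : ℂ) ^ 4 * dotChar ψ γ (-x) =
      Fintype.card (ι → F) *
        #{p ∈ (A ×ˢ A) ×ˢ (A ×ˢ A) | p.1.1 - p.1.2 + (p.2.1 - p.2.2) = x} := by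
  have h (γ : ι → F) : (‖fourierSum ψ A γ‖ : ℂ) ^ 4 * dotChar ψ γ (-x) =
      ∑ p ∈ (A ×ˢ A) ×ˢ (A ×ˢ A), dotChar ψ γ (p.1.1 - p.1.2 + (p.2.1 - p.2.2) - x) := by
    rw [Finset.sum_product (A ×ˢ A) (A ×ˢ A), pow_mul' _ 2 2, sq, norm_fourierSum_sq,
      Finset.sum_mul_sum, Finset.sum_mul]
    simp_rw [Finset.sum_mul, sub_eq_add_neg (_ + _) x, AddChar.map_add_eq_mul]
  simp_rw [h, sum_sum_dotChar_eq_card hψ, sub_eq_zero]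

end Fourier

section Bogolyubov

lemma exists_submodule_forall_dotProduct_eq_zero {F ι : Type*} [Field F] [Fintype ι]
    (K : Finset (ι → F)) :
    ∃ V : Submodule F (ι → F), Module.finrank F (ι → F) ≤ #K + Module.finrank F V ∧
      ∀ v ∈ V, ∀ γ ∈ K, γ ⬝ᵥ v = 0 := by
  let M : Matrix K ι F := Matrix.of fun γ => γ.1
  refine ⟨LinearMap.ker M.mulVecLin, ?_, fun v hv γ hγ => congr_fun hv ⟨γ, hγ⟩⟩
  rw [← LinearMap.finrank_range_add_finrank_ker M.mulVecLin]
  have hM := M.rank_le_card_height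
  rw [Fintype.card_coe] at hM
  exact Nat.add_le_add_right hM _

lemma sum_sq_mul_pos {Γ : Type*} [Fintype Γ] {R c : Γ → ℝ} {t : ℝ} (γ₀ : Γ)
    (hR : ∀ γ, 0 ≤ R γ) (hc : ∀ γ, -1 ≤ c γ) (hc_one : ∀ γ, t ≤ R γ → c γ = 1) (ht : 0 ≤ t)
    (hγ₀ : t ≤ R γ₀) (hsum : t * (∑ γ, R γ - R γ₀) < R γ₀ ^ 2) :
    0 < ∑ γ, R γ ^ 2 * c γ := by
  classical
  have hterm (γ : Γ) : -(t * R γ) ≤ R γ ^ 2 * c γ := by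
    by_cases h : t ≤ R γ
    · rw [hc_one γ h]; nlinarith [hR γ]
    · nlinarith [hR γ, hc γ]
  have hrest := Finset.sum_le_sum fun γ (_ : γ ∈ univ.erase γ₀) => hterm γ
  rw [Finset.sum_neg_distrib, ← Finset.mul_sum, Finset.sum_erase_eq_sub (mem_univ γ₀)] at hrest
  rw [← Finset.add_sum_erase _ _ (mem_univ γ₀), hc_one γ₀ hγ₀]
  linarith

variable {F ι : Type*} [Field F] [Fintype F] [DecidableEq F] [Fintype ι] [DecidableEq ι]
  {ψ : AddChar F ℂ}

lemma card_large_fourierSum_le (hψ : ψ ≠ 0) (A : Finset (ι → F)) {α : ℝ} (hα : 0 < α)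
    (hA : α * Fintype.card (ι → F) ≤ #A) :
    (#{γ | α * #A ^ 2 ≤ ‖fourierSum ψ A γ‖ ^ 2} : ℝ) ≤ 1 / α ^ 2 := by
  set K := ({γ | α * #A ^ 2 ≤ ‖fourierSum ψ A γ‖ ^ 2} : Finset (ι → F))
  have hA0 : 0 < (#A : ℝ) := (mul_pos hα (by simp [Fintype.card_pos])).trans_le hA
  have hK : #K * (α * #A ^ 2) ≤ Fintype.card (ι → F) * #A := calc
    #K * (α * #A ^ 2) ≤ ∑ γ ∈ K, ‖fourierSum ψ A γ‖ ^ 2 := by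
      simpa using Finset.card_nsmul_le_sum K _ _ fun γ hγ => (mem_filter.1 hγ).2
    _ ≤ ∑ γ, ‖fourierSum ψ A γ‖ ^ 2 :=
      Finset.sum_le_sum_of_subset_of_nonneg (subset_univ K) fun _ _ _ => sq_nonneg _
    _ = Fintype.card (ι → F) * #A := sum_norm_fourierSum_sq hψ A
  have hK' : #K * α * #A ≤ Fintype.card (ι → F) :=
    le_of_mul_le_mul_right (by nlinarith) hA0
  rw [le_div_iff₀ (by positivity)]
  exact le_of_mul_le_mul_right (by nlinarith) hA0

lemma exists_add_sub_eq_of_forall_dotProduct_eq_zero (hψ : ψ ≠ 0) (A : Finset (ι → F))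
    {α : ℝ} (hα : 0 < α) (hA : α * Fintype.card (ι → F) ≤ #A) {v : ι → F}
    (hv : ∀ γ, α * #A ^ 2 ≤ ‖fourierSum ψ A γ‖ ^ 2 → γ ⬝ᵥ v = 0) :
    ∃ a ∈ A, ∃ b ∈ A, ∃ c ∈ A, ∃ e ∈ A, v = a + b - c - e := by
  have hq : (0 : ℝ) < Fintype.card (ι → F) := by exact_mod_cast Fintype.card_pos
  have hA0 : (0 : ℝ) < #A := (mul_pos hα hq).trans_le hA
  have hα1 : α ≤ 1 := by
    have hAq : (#A : ℝ) ≤ Fintype.card (ι → F) := by exact_mod_cast card_le_univ A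
    exact le_of_mul_le_mul_right (by linarith) hq
  have hR0 : ‖fourierSum ψ A 0‖ ^ 2 = #A ^ 2 := by simp [fourierSum]
  have hpos : 0 < ∑ γ, (‖fourierSum ψ A γ‖ ^ 2) ^ 2 * (dotChar ψ γ (-v)).re := by
    refine sum_sq_mul_pos (t := α * #A ^ 2) 0 (fun γ => sq_nonneg _) (fun γ => ?_)
      (fun γ hγ => ?_) (by positivity) ?_ ?_
    · exact (abs_le.1 ((Complex.abs_re_le_norm _).trans (AddChar.norm_apply _ _).le)).1
    · simp [dotProduct_neg, hv γ hγ]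
    · rw [hR0]; nlinarith
    · rw [sum_norm_fourierSum_sq hψ, hR0]
      nlinarith [mul_le_mul_of_nonneg_right hA (pow_nonneg hA0.le 3), mul_pos hα (pow_pos hA0 4)]
  have hcount := congrArg Complex.re (sum_norm_fourierSum_pow_four_mul hψ A v)
  simp only [Complex.re_sum, ← Complex.ofReal_pow, Complex.re_ofReal_mul, ← Nat.cast_mul,
    Complex.natCast_re] at hcount
  simp only [← pow_mul] at hpos
  rw [hcount] at hpos
  obtain ⟨⟨⟨a, c⟩, b, e⟩, hp⟩ :=
    Finset.card_pos.1 (Nat.pos_of_mul_pos_left (by exact_mod_cast hpos))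
  simp only [mem_filter, mem_product] at hp
  exact ⟨a, hp.1.1.1, b, hp.1.2.1, c, hp.1.1.2, e, hp.1.2.2, by rw [← hp.2]; abel⟩

theorem bogolyubov (A : Finset (ι → F)) {α : ℝ} (hα : 0 < α)
    (hA : α * Fintype.card (ι → F) ≤ #A) :
    ∃ V : Submodule F (ι → F),
      (Module.finrank F (ι → F) : ℝ) ≤ 1 / α ^ 2 + Module.finrank F V ∧
      ∀ v ∈ V, ∃ a ∈ A, ∃ b ∈ A, ∃ c ∈ A, ∃ e ∈ A, v = a + b - c - e := by
  obtain ⟨ψ, hψ⟩ : ∃ ψ : AddChar F ℂ, ψ ≠ 0 := by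
    obtain ⟨ψ, h⟩ := AddChar.exists_apply_ne_zero.2 (one_ne_zero (α := F))
    exact ⟨ψ, AddChar.ne_zero_iff.2 ⟨1, h⟩⟩
  obtain ⟨V, hV, hVK⟩ := exists_submodule_forall_dotProduct_eq_zero
    ({γ | α * #A ^ 2 ≤ ‖fourierSum ψ A γ‖ ^ 2} : Finset (ι → F))
  refine ⟨V, ?_, fun v hv => exists_add_sub_eq_of_forall_dotProduct_eq_zero hψ A hα hA
    fun γ hγ => hVK v hv γ (by simpa using hγ)⟩
  have hK := card_large_fourierSum_le hψ A hα hA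
  have hV' := (Nat.cast_le (α := ℝ)).2 hV
  push_cast at hV'
  linarith

end Bogolyubov

section InSumDiff

variable {α β : Type*} [AddCommGroup α] [AddCommGroup β] {B C : Multiset α} {k l k' l' : ℕ}
  {g g' : α}

lemma InSumDiff.of_mem (hg : g ∈ B) (hk : 1 ≤ k) : InSumDiff B k l g :=
  ⟨1, 0, fun _ => g, Fin.elim0, hk, l.zero_le, fun _ => hg, fun i => i.elim0, by simp⟩

lemma InSumDiff.add (h : InSumDiff B k l g) (h' : InSumDiff B k' l' g') :
    InSumDiff B (k + k') (l + l') (g + g') := by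
  obtain ⟨m, m', a, b, hm, hm', ha, hb, rfl⟩ := h
  obtain ⟨n, n', c, e, hn, hn', hc, he, rfl⟩ := h'
  refine ⟨m + n, m' + n', Fin.append a c, Fin.append b e, by omega, by omega,
    Fin.addCases (by simpa using ha) (by simpa using hc),
    Fin.addCases (by simpa using hb) (by simpa using he), ?_⟩
  simp only [Fin.sum_univ_add, Fin.append_left, Fin.append_right]
  abel

lemma InSumDiff.neg (h : InSumDiff B k l g) : InSumDiff B l k (-g) := by
  obtain ⟨m, m', a, b, hm, hm', ha, hb, rfl⟩ := h
  exact ⟨m', m, b, a, hm', hm, hb, ha, by abel⟩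

lemma InSumDiff.sub (h : InSumDiff B k l g) (h' : InSumDiff B k' l' g') :
    InSumDiff B (k + l') (l + k') (g - g') :=
  sub_eq_add_neg g g' ▸ h.add h'.neg

lemma InSumDiff.map (φ : α →+ β) (h : InSumDiff B k l g) : InSumDiff (B.map φ) k l (φ g) := by
  obtain ⟨m, m', a, b, hm, hm', ha, hb, rfl⟩ := h
  exact ⟨m, m', φ ∘ a, φ ∘ b, hm, hm', fun i => Multiset.mem_map_of_mem φ (ha i),
    fun i => Multiset.mem_map_of_mem φ (hb i), by simp [map_sum]⟩

lemma InSumDiff.mono (hBC : B ⊆ C) (h : InSumDiff B k l g) : InSumDiff C k l g := by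
  obtain ⟨m, m', a, b, hm, hm', ha, hb, rfl⟩ := h
  exact ⟨m, m', a, b, hm, hm', fun i => hBC (ha i), fun i => hBC (hb i), rfl⟩

end InSumDiff

section RankOne

def rankOne {ι : Type*} [Fintype ι] {κ : ι → Type*} {R : Type*} [CommMonoid R]
    (u : (i : ι) → κ i → R) (x : (i : ι) → κ i) : R :=
  ∏ i, u i (x i)

variable {d : ℕ} {κ : Fin (d + 1) → Type*} {R : Type*}

lemma rankOne_cons_apply [CommMonoid R] (a : κ 0 → R) (w : (i : Fin d) → κ i.succ → R)
    (x : (i : Fin (d + 1)) → κ i) :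
    rankOne (Fin.cons a w : (i : Fin (d + 1)) → κ i → R) x = a (x 0) * rankOne w (Fin.tail x) :=
  Fin.prod_univ_succ _

lemma rankOne_cons_add [CommRing R] (a b : κ 0 → R) (w : (i : Fin d) → κ i.succ → R) :
    rankOne (Fin.cons (a + b) w : (i : Fin (d + 1)) → κ i → R) =
      rankOne (Fin.cons a w : (i : Fin (d + 1)) → κ i → R) +
        rankOne (Fin.cons b w : (i : Fin (d + 1)) → κ i → R) := by
  funext x
  simp only [rankOne_cons_apply, Pi.add_apply, add_mul]

lemma rankOne_cons_sub [CommRing R] (a b : κ 0 → R) (w : (i : Fin d) → κ i.succ → R) :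
    rankOne (Fin.cons (a - b) w : (i : Fin (d + 1)) → κ i → R) =
      rankOne (Fin.cons a w : (i : Fin (d + 1)) → κ i → R) -
        rankOne (Fin.cons b w : (i : Fin (d + 1)) → κ i → R) := by
  funext x
  simp only [rankOne_cons_apply, Pi.sub_apply, sub_mul]

end RankOne

lemma sub_mul_card_le_card_filter {ι : Type*} (s : Finset ι) (f : ι → ℝ) {M δ ε : ℝ}
    (hM : 0 < M) (hε : 0 ≤ ε) (hf : ∀ i ∈ s, f i ≤ M) (hsum : δ * M * #s ≤ ∑ i ∈ s, f i) :
    (δ - ε) * #s ≤ #{i ∈ s | ε * M ≤ f i} := by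
  have hlarge : ∑ i ∈ s with ε * M ≤ f i, f i ≤ #{i ∈ s | ε * M ≤ f i} * M := by
    simpa using Finset.sum_le_card_nsmul _ f M fun i hi => hf i (mem_filter.1 hi).1
  have hsmall : ∑ i ∈ s.filter (fun i => ¬ε * M ≤ f i), f i ≤ #s * (ε * M) := calc
    _ ≤ #(s.filter fun i => ¬ε * M ≤ f i) * (ε * M) := by
      simpa using Finset.sum_le_card_nsmul _ f (ε * M) fun i hi =>
        (not_le.1 (mem_filter.1 hi).2).le
    _ ≤ #s * (ε * M) :=
      mul_le_mul_of_nonneg_right (by exact_mod_cast card_filter_le _ _) (by positivity)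
  have hsplit := Finset.sum_filter_add_sum_filter_not s (fun i => ε * M ≤ f i) f
  refine le_of_mul_le_mul_right ?_ hM
  linarith

section ConsSlice

variable {d : ℕ} {α : Fin (d + 1) → Type*} [∀ i, Fintype (α i)] [∀ i, DecidableEq (α i)]

def consSlice (S : Finset ((i : Fin (d + 1)) → α i)) (a : α 0) : Finset ((i : Fin d) → α i.succ) :=
  {w | Fin.cons a w ∈ S}

lemma sum_card_consSlice (S : Finset ((i : Fin (d + 1)) → α i)) :
    ∑ a, #(consSlice S a) = #S := by
  calc ∑ a, #(consSlice S a)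
        = ∑ p : α 0 × ((i : Fin d) → α i.succ), if Fin.cons p.1 p.2 ∈ S then 1 else 0 := by
        simp only [consSlice, Finset.card_filter, Fintype.sum_prod_type]
    _ = ∑ u, if u ∈ S then 1 else 0 := Fintype.sum_equiv (Fin.consEquiv α) _ _ fun _ => rfl
    _ = #S := by simp

lemma half_mul_card_le_card_filter_consSlice [∀ i, Nonempty (α i)] {δ : ℝ} (hδ : 0 ≤ δ)
    (S : Finset ((i : Fin (d + 1)) → α i))
    (hS : δ * Fintype.card ((i : Fin (d + 1)) → α i) ≤ #S) :
    δ / 2 * Fintype.card (α 0) ≤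
      #{a | δ / 2 * Fintype.card ((i : Fin d) → α i.succ) ≤ #(consSlice S a)} := by
  have h := sub_mul_card_le_card_filter univ (fun a => (#(consSlice S a) : ℝ))
    (M := Fintype.card ((i : Fin d) → α i.succ)) (δ := δ) (ε := δ / 2)
    (by exact_mod_cast Fintype.card_pos) (by positivity)
    (fun a _ => by exact_mod_cast card_le_univ _) ?_
  · simpa only [sub_half, card_univ] using h
  · rw [← Nat.cast_sum, sum_card_consSlice, card_univ]
    simpa [Fintype.card_pi, Fin.prod_univ_succ, mul_assoc, mul_comm, mul_left_comm] using hS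

end ConsSlice

lemma inSumDiff_rankOne_cons {d : ℕ} {κ : Fin (d + 1) → Type*} [∀ i, Fintype (κ i)]
    [∀ i, DecidableEq (κ i)] {R : Type*} [CommRing R] [Fintype R] [DecidableEq R]
    {S : Finset ((i : Fin (d + 1)) → κ i → R)} {a : κ 0 → R} {w : (i : Fin d) → κ i.succ → R}
    {k l : ℕ} (h : InSumDiff ((consSlice S a).val.map rankOne) k l (rankOne w)) :
    InSumDiff (S.val.map rankOne) k l (rankOne (Fin.cons a w : (i : Fin (d + 1)) → κ i → R)) := by
  let φ : (((i : Fin d) → κ i.succ) → R) →+ (((i : Fin (d + 1)) → κ i) → R) :=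
    AddMonoidHom.mk' (fun g x => a (x 0) * g (Fin.tail x)) fun g g' => by
      funext x; simp [mul_add]
  have hφ (w : (i : Fin d) → κ i.succ → R) :
      φ (rankOne w) = rankOne (Fin.cons a w : (i : Fin (d + 1)) → κ i → R) :=
    funext fun x => (rankOne_cons_apply a w x).symm
  rw [← hφ]
  refine (h.map φ).mono fun f hf => ?_
  obtain ⟨_, hg, rfl⟩ := Multiset.mem_map.1 hf
  obtain ⟨w', hw', rfl⟩ := Multiset.mem_map.1 hg
  rw [hφ]
  exact Multiset.mem_map_of_mem _ (by simpa [consSlice] using hw')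

section System

variable {F : Type*} [Field F] {d : ℕ}

lemma isSystemTuples_univ [Fintype F] {n : Fin d → ℕ} {l : ℝ} (hl : 0 ≤ l) :
    IsSystemTuples l (univ : Finset ((i : Fin d) → Fin (n i) → F)) :=
  ⟨fun _ _ => ⊤, fun _ _ _ _ => rfl, fun _ _ => by simpa [finrank_top] using hl, by simp⟩

lemma IsSystemTuples.mono {n : Fin d → ℕ} {l l' : ℝ} {T : Finset ((i : Fin d) → Fin (n i) → F)}
    (h : IsSystemTuples l T) (hl : l ≤ l') : IsSystemTuples l' T := by
  obtain ⟨U, hprefix, hcodim, hmem⟩ := h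
  exact ⟨U, hprefix, fun k u => (hcodim k u).trans (by linarith), hmem⟩

lemma IsSystemTuples.inter [DecidableEq F] {n : Fin d → ℕ} {l l' : ℝ}
    {T T' : Finset ((i : Fin d) → Fin (n i) → F)} (h : IsSystemTuples l T)
    (h' : IsSystemTuples l' T') : IsSystemTuples (l + l') (T ∩ T') := by
  obtain ⟨U, hprefix, hcodim, hmem⟩ := h
  obtain ⟨U', hprefix', hcodim', hmem'⟩ := h'
  refine ⟨fun k u => U k u ⊓ U' k u, fun k u v huv =>
    congrArg₂ (· ⊓ ·) (hprefix k u v huv) (hprefix' k u v huv),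
    fun k u => ?_, fun u => by simp [hmem, hmem', forall_and]⟩
  have hsup := Submodule.finrank_le (U k u ⊔ U' k u)
  have hdim : (Module.finrank F (U k u) : ℝ) + Module.finrank F (U' k u) ≤
      Module.finrank F (Fin (n k) → F) + Module.finrank F ↥(U k u ⊓ U' k u) := by
    exact_mod_cast (Submodule.finrank_sup_add_finrank_inf_eq (U k u) (U' k u)).symm.trans_le
      (Nat.add_le_add_right hsup _)
  linarith [hcodim k u, hcodim' k u]

lemma exists_isSystemTuples_cons [Fintype F] {n : Fin (d + 1) → ℕ} {l : ℝ}
    (V : Submodule F (Fin (n 0) → F))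
    (hV : (Module.finrank F (Fin (n 0) → F) : ℝ) ≤ l + Module.finrank F V)
    (T : (Fin (n 0) → F) → Finset ((i : Fin d) → Fin (n i.succ) → F))
    (hT : ∀ a ∈ V, IsSystemTuples l (T a)) :
    ∃ T' : Finset ((i : Fin (d + 1)) → Fin (n i) → F), IsSystemTuples l T' ∧
      ∀ u, u ∈ T' ↔ u 0 ∈ V ∧ Fin.tail u ∈ T (u 0) := by
  classical
  have hl : 0 ≤ l := by
    have := Submodule.finrank_le V
    have : (Module.finrank F V : ℝ) ≤ Module.finrank F (Fin (n 0) → F) := by exact_mod_cast this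
    linarith
  choose! U hprefix hcodim hmem using hT
  let W (k : Fin (d + 1)) (u : (i : Fin (d + 1)) → Fin (n i) → F) : Submodule F (Fin (n k) → F) :=
    Fin.cases V (fun j => if u 0 ∈ V then U (u 0) j (Fin.tail u) else ⊤) k
  have hW_zero (u : (i : Fin (d + 1)) → Fin (n i) → F) : W 0 u = V := rfl
  have hW_succ (j : Fin d) (u : (i : Fin (d + 1)) → Fin (n i) → F) :
      W j.succ u = if u 0 ∈ V then U (u 0) j (Fin.tail u) else ⊤ := rfl
  refine ⟨({u | u 0 ∈ V ∧ Fin.tail u ∈ T (u 0)} : Finset ((i : Fin (d + 1)) → Fin (n i) → F)),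
    ⟨W, fun k u v huv => ?_, fun k u => ?_, fun u => ?_⟩,
    fun u => by simp⟩
  · cases k using Fin.cases with
    | zero => rfl
    | succ j =>
      rw [hW_succ, hW_succ, huv 0 (Fin.succ_pos j)]
      split_ifs with hv
      · exact hprefix _ hv j _ _ fun i hi => huv i.succ (Fin.succ_lt_succ_iff.2 hi)
      · rfl
  · cases k using Fin.cases with
    | zero => rw [hW_zero]; exact hV
    | succ j =>
      rw [hW_succ]
      by_cases hu : u 0 ∈ V
      · rw [if_pos hu]; exact hcodim _ hu j (Fin.tail u)
      · rw [if_neg hu, finrank_top]; linarith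
  · simp only [mem_filter, mem_univ, true_and, Fin.forall_fin_succ, hW_zero,
      hW_succ]
    by_cases hu : u 0 ∈ V
    · simp only [hu, if_true, hmem _ hu, true_and]; rfl
    · simp [hu]

end System

lemma card_le_card_filter_of_le_map {α β : Type*} [DecidableEq β] {s : Multiset β}
    {t : Finset α} {f : α → β} (h : s ≤ t.val.map f) :
    Multiset.card s ≤ #{a ∈ t | f a ∈ s} :=
  calc Multiset.card s ≤ Multiset.card ((t.val.map f).filter (· ∈ s)) :=
        Multiset.card_le_card (Multiset.le_filter.2 ⟨h, fun _ => id⟩)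
    _ = #{a ∈ t | f a ∈ s} := by rw [Multiset.filter_map, Multiset.card_map]; rfl

section Induction

variable {F : Type*} [Field F] [Fintype F] [DecidableEq F]

lemma exists_isSystemTuples_inSumDiff_succ {d : ℕ} {n : Fin (d + 1) → ℕ} {δ L : ℝ} {k : ℕ}
    (hδ : 0 < δ) (hL : 1 / δ ^ 2 ≤ L)
    (ih : ∀ S' : Finset ((i : Fin d) → Fin (n i.succ) → F),
      δ / 2 * Fintype.card ((i : Fin d) → Fin (n i.succ) → F) ≤ #S' →
      ∃ T, IsSystemTuples L T ∧ ∀ u ∈ T, InSumDiff (S'.val.map rankOne) k k (rankOne u))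
    (S : Finset ((i : Fin (d + 1)) → Fin (n i) → F))
    (hS : δ * Fintype.card ((i : Fin (d + 1)) → Fin (n i) → F) ≤ #S) :
    ∃ T, IsSystemTuples (4 * L) T ∧
      ∀ u ∈ T, InSumDiff (S.val.map rankOne) (4 * k) (4 * k) (rankOne u) := by
  set A : Finset (Fin (n 0) → F) :=
    {a | δ / 2 * Fintype.card ((i : Fin d) → Fin (n i.succ) → F) ≤ #(consSlice S a)}
  have hA : δ / 2 * Fintype.card (Fin (n 0) → F) ≤ #A :=
    half_mul_card_le_card_filter_consSlice hδ.le S hS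
  obtain ⟨V, hV, hVA⟩ := bogolyubov A (half_pos hδ) hA
  choose! T hT hTS using fun a (ha : a ∈ A) => ih (consSlice S a) (mem_filter.1 ha).2
  choose! a ha b hb c hc e he habce using hVA
  have hV' : (Module.finrank F (Fin (n 0) → F) : ℝ) ≤ 4 * L + Module.finrank F V := by
    have : 1 / (δ / 2) ^ 2 = 4 * (1 / δ ^ 2) := by field_simp; ring
    linarith
  obtain ⟨T', hT', hmem⟩ := exists_isSystemTuples_cons V hV'
    (fun v => T (a v) ∩ T (b v) ∩ T (c v) ∩ T (e v)) fun v hv =>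
      ((((hT _ (ha v hv)).inter (hT _ (hb v hv))).inter (hT _ (hc v hv))).inter
        (hT _ (he v hv))).mono (by linarith)
  refine ⟨T', hT', fun u hu => ?_⟩
  obtain ⟨hu0, hut⟩ := (hmem u).1 hu
  simp only [mem_inter] at hut
  rw [← Fin.cons_self_tail u, habce _ hu0, rankOne_cons_sub, rankOne_cons_sub, rankOne_cons_add,
    show 4 * k = k + k + k + k by ring]
  exact (((inSumDiff_rankOne_cons (hTS _ (ha _ hu0) _ hut.1.1.1)).add
    (inSumDiff_rankOne_cons (hTS _ (hb _ hu0) _ hut.1.1.2))).sub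
    (inSumDiff_rankOne_cons (hTS _ (hc _ hu0) _ hut.1.2))).sub
    (inSumDiff_rankOne_cons (hTS _ (he _ hu0) _ hut.2))

theorem exists_isSystemTuples_inSumDiff (d : ℕ) (n : Fin d → ℕ) {δ : ℝ} (hδ : 0 < δ)
    (S : Finset ((i : Fin d) → Fin (n i) → F))
    (hS : δ * Fintype.card ((i : Fin d) → Fin (n i) → F) ≤ #S) :
    ∃ T, IsSystemTuples ((16 : ℝ) ^ d / δ ^ 2) T ∧
      ∀ u ∈ T, InSumDiff (S.val.map rankOne) (4 ^ d) (4 ^ d) (rankOne u) := by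
  induction d generalizing δ with
  | zero =>
    have hS0 : (0 : ℝ) < #S := hδ.trans_le (by simpa using hS)
    obtain ⟨w, hw⟩ := Finset.card_pos.1 (by exact_mod_cast hS0)
    refine ⟨univ, isSystemTuples_univ (by positivity), fun u _ => ?_⟩
    rw [Subsingleton.elim u w]
    exact InSumDiff.of_mem (Multiset.mem_map_of_mem _ hw) le_rfl
  | succ d ih =>
    have hL : 1 / δ ^ 2 ≤ 16 ^ d / (δ / 2) ^ 2 := calc
      1 / δ ^ 2 ≤ 16 ^ d / δ ^ 2 := by gcongr; exact one_le_pow₀ (by norm_num)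
      _ ≤ 16 ^ d / (δ / 2) ^ 2 := by gcongr; linarith
    have h16 : (16 : ℝ) ^ (d + 1) / δ ^ 2 = 4 * (16 ^ d / (δ / 2) ^ 2) := by field_simp; ring
    rw [h16, pow_succ' (4 : ℕ) d]
    exact exists_isSystemTuples_inSumDiff_succ hδ hL (fun S' hS' => ih _ (half_pos hδ) S' hS') S hS

end Induction

theorem find_system_general
    (F : Type*) [Field F] [Fintype F]
    (d : ℕ) (n : Fin d → ℕ)
    (δ : ℝ) (hδ : 0 < δ)
    (B' : Multiset (Arr F n Finset.univ)) (hB' : B' ≤ bigB F n)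
    (hdense : δ * ((bigB F n).card : ℝ) ≤ (B'.card : ℝ)) :
    ∃ T : Finset ((i : Fin d) → Fin (n i) → F),
      IsSystemTuples ((16 : ℝ) ^ d / δ ^ 2) T ∧
      ∀ u ∈ T, InSumDiff B' (4 ^ d) (4 ^ d) (tens u) := by
  classical
  set S : Finset ((i : Fin d) → Fin (n i) → F) := {u | tens u ∈ B'}
  have hS : δ * Fintype.card ((i : Fin d) → Fin (n i) → F) ≤ #S := calc
    _ = δ * Multiset.card (bigB F n) := by simp [bigB]
    _ ≤ Multiset.card B' := hdense
    _ ≤ #S := by exact_mod_cast card_le_card_filter_of_le_map hB'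
  obtain ⟨T, hT, hrep⟩ := exists_isSystemTuples_inSumDiff d n hδ S hS
  refine ⟨T, hT, fun u hu => ?_⟩
  -- `reindex (rankOne u)` is `tens u` by definition.
  let reindex : (((i : Fin d) → Fin (n i)) → F) →+ Arr F n univ :=
    (LinearMap.funLeft F F fun x i => x ⟨i, mem_univ i⟩).toAddMonoidHom
  refine ((hrep u hu).map reindex).mono fun f hf => ?_
  obtain ⟨_, hg, rfl⟩ := Multiset.mem_map.1 hf
  obtain ⟨w, hw, rfl⟩ := Multiset.mem_map.1 hg
  exact (mem_filter.1 hw).2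

/-- For every multiset `B' ⊆ B` with `|B'| ≥ δ|B|` there is a `(16^d/δ²)`-system whose
elements are chosen from `4^d B' - 4^d B'`. -/
theorem find_system
    (F : Type*) [Field F] [Fintype F] [DecidableEq F]
    (d : ℕ) (n : Fin d → ℕ)
    (δ : ℝ) (hδ : 0 < δ)
    (B' : Multiset (Arr F n Finset.univ)) (hB' : B' ≤ bigB F n)
    (hdense : δ * ((bigB F n).card : ℝ) ≤ (B'.card : ℝ)) :
    ∃ T : Finset ((i : Fin d) → Fin (n i) → F),
      IsSystemTuples ((16 : ℝ) ^ d / δ ^ 2) T ∧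
      ∀ u ∈ T, InSumDiff B' (4 ^ d) (4 ^ d) (tens u) :=
  find_system_general F d n δ hδ B' hB' hdense
end

section
/- Let F be a finite field, let Q be a k-system in F^{n_1} ⊗ ⋯ ⊗ F^{n_d}, and for every nonempty I ⊆ [d] let L_I ⊆ F^I be a subspace of codimension at most l. Let T = ⋂_{I⊆[d], I≠∅} (L_I ⊗ F^{I^c}). Then Q ∩ T contains an f-system for f = k + 2^d·l. -/
open Finset

/-- Tensor product `F^J ⊗ F^{I∖J} → F^I` (for `J ⊆ I`). -/
def tmulA {F : Type*} [Field F] {d : ℕ} {n : Fin d → ℕ} {I J : Finset (Fin d)}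
    (h : J ⊆ I) (s : Arr F n J) (t : Arr F n (I \ J)) : Arr F n I :=
  fun x => s (fun j => x ⟨j.1, h j.2⟩) * t (fun j => x ⟨j.1, Finset.sdiff_subset j.2⟩)

/-- The subspace `V ⊗ F^{I∖J} ⊆ F^I` for a subspace `V ⊆ F^J` (`J ⊆ I`). -/
def spanTensorL {F : Type*} [Field F] {d : ℕ} {n : Fin d → ℕ} {I J : Finset (Fin d)}
    (h : J ⊆ I) (V : Submodule F (Arr F n J)) : Submodule F (Arr F n I) :=
  Submodule.span F {g | ∃ s ∈ V, ∃ t : Arr F n (I \ J), g = tmulA h s t}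

/-! Impose the constraint `⊗_{i ∈ I} u_i ∈ L_I` on the vector `u_m` with `m = max I`. Once
the `u_i` with `i < m` are fixed, `v ↦ (⊗_{i ∈ I ∖ {m}} u_i) ⊗ v` is linear, so the constraint
is a subspace of `F^{n_m}` of codimension at most `l` that depends only on earlier vectors.
At most `2^d` sets `I` have largest element `m`, so intersecting these subspaces with those of
the `k`-system raises the codimension by at most `2^d · l`. -/

section Codimension

variable {F M N : Type*} [Field F] [AddCommGroup M] [Module F M] [FiniteDimensional F M]

lemma finrank_add_finrank_le_finrank_add_finrank_inf (s t : Submodule F M) :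
    Module.finrank F s + Module.finrank F t ≤
      Module.finrank F M + Module.finrank F (s ⊓ t : Submodule F M) := by
  rw [← Submodule.finrank_sup_add_finrank_inf_eq s t]
  exact Nat.add_le_add_right (Submodule.finrank_le (s ⊔ t)) _

lemma finrank_le_add_finrank_inf {s t : Submodule F M} {a b : ℕ}
    (hs : Module.finrank F M ≤ a + Module.finrank F s)
    (ht : Module.finrank F M ≤ b + Module.finrank F t) :
    Module.finrank F M ≤ a + b + Module.finrank F (s ⊓ t : Submodule F M) := by
  have := finrank_add_finrank_le_finrank_add_finrank_inf s t
  omega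

lemma finrank_le_add_finrank_finset_inf {ι : Type*} (S : Finset ι) (f : ι → Submodule F M)
    {c : ℕ} (hf : ∀ i ∈ S, Module.finrank F M ≤ c + Module.finrank F (f i)) :
    Module.finrank F M ≤ #S * c + Module.finrank F (S.inf f : Submodule F M) := by
  classical
  induction S using Finset.induction_on with
  | empty => rw [Finset.inf_empty, finrank_top, card_empty, zero_mul, zero_add]
  | insert i S hi ih =>
    rw [inf_insert, card_insert_of_notMem hi, Nat.succ_mul, add_comm (#S * c)]
    exact finrank_le_add_finrank_inf (hf i (mem_insert_self i S))
      (ih fun j hj => hf j (mem_insert_of_mem hj))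

lemma finrank_le_add_finrank_comap [AddCommGroup N] [Module F N] [FiniteDimensional F N]
    (f : M →ₗ[F] N) {V : Submodule F N} {c : ℕ}
    (hV : Module.finrank F N ≤ c + Module.finrank F V) :
    Module.finrank F M ≤ c + Module.finrank F (V.comap f) := by
  have hker : LinearMap.ker (V.mkQ ∘ₗ f) = V.comap f := by
    rw [LinearMap.ker_comp, Submodule.ker_mkQ]
  have hrank := LinearMap.finrank_range_add_finrank_ker (V.mkQ ∘ₗ f)
  have := Submodule.finrank_quotient_add_finrank V
  have := Submodule.finrank_le (LinearMap.range (V.mkQ ∘ₗ f))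
  rw [hker] at hrank
  omega

end Codimension

lemma IsSystemTuples.filter_forall_mem {F : Type*} [Field F] {d : ℕ} {n : Fin d → ℕ}
    {l : ℝ} {c : ℕ} {T : Finset ((i : Fin d) → Fin (n i) → F)} (hT : IsSystemTuples l T)
    (W : (m : Fin d) → ((i : Fin d) → Fin (n i) → F) → Submodule F (Fin (n m) → F))
    (hW : ∀ m u v, (∀ j, j < m → u j = v j) → W m u = W m v)
    (hWc : ∀ m u, Module.finrank F (Fin (n m) → F) ≤ c + Module.finrank F (W m u))
    [DecidablePred fun u : (i : Fin d) → Fin (n i) → F => ∀ m, u m ∈ W m u] :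
    IsSystemTuples (l + c) {u ∈ T | ∀ m, u m ∈ W m u} := by
  obtain ⟨U, hUdep, hUc, hUmem⟩ := hT
  refine ⟨fun m u => U m u ⊓ W m u, fun m u v huv =>
    congrArg₂ (· ⊓ ·) (hUdep m u v huv) (hW m u v huv),
    fun m u => ?_, fun u => ?_⟩
  · have hinf : (Module.finrank F (U m u) + Module.finrank F (W m u) : ℝ) ≤
        Module.finrank F (Fin (n m) → F) +
          Module.finrank F (U m u ⊓ W m u : Submodule F _) := by
      exact_mod_cast finrank_add_finrank_le_finrank_add_finrank_inf (U m u) (W m u)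
    have hWmu : (Module.finrank F (Fin (n m) → F) : ℝ) ≤ c + Module.finrank F (W m u) := by
      exact_mod_cast hWc m u
    linarith [hUc m u]
  · simp only [mem_filter, hUmem, Submodule.mem_inf, forall_and]

section Slices

variable {F : Type*} [Field F] {d : ℕ} {n : Fin d → ℕ}

def tensOn (I : Finset (Fin d)) (u : (i : Fin d) → Fin (n i) → F) : Arr F n I :=
  fun x => ∏ i : I, u i (x i)

lemma tens_eq_tmulA (u : (i : Fin d) → Fin (n i) → F) (I : Finset (Fin d)) :
    tens u = tmulA (subset_univ I) (tensOn I u) (tensOn (univ \ I) u) := by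
  funext x
  set g : Fin d → F := fun i => u i (x ⟨i, mem_univ i⟩)
  change ∏ i, g i = (∏ i : I, g i) * ∏ i : ↥(univ \ I), g i
  rw [prod_coe_sort, prod_coe_sort, mul_comm, prod_sdiff (subset_univ I)]

lemma tens_mem_spanTensorL {u : (i : Fin d) → Fin (n i) → F} {I : Finset (Fin d)}
    {V : Submodule F (Arr F n I)} (hu : tensOn I u ∈ V) :
    tens u ∈ spanTensorL (subset_univ I) V := by
  rw [tens_eq_tmulA u I]
  exact Submodule.subset_span ⟨_, hu, _, rfl⟩

lemma tensOn_update {I : Finset (Fin d)} {m : Fin d} (hm : m ∈ I)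
    (u : (i : Fin d) → Fin (n i) → F) (v : Fin (n m) → F) (x : (i : I) → Fin (n i)) :
    tensOn I (Function.update u m v) x =
      v (x ⟨m, hm⟩) * ∏ i ∈ (univ : Finset I).erase ⟨m, hm⟩, u i (x i) := by
  rw [tensOn, ← mul_prod_erase univ _ (mem_univ ⟨m, hm⟩), Function.update_self]
  congr 1
  refine prod_congr rfl fun i hi => ?_
  rw [Function.update_of_ne fun h => ne_of_mem_erase hi (Subtype.ext h)]

def tensOnUpdate {I : Finset (Fin d)} {m : Fin d} (hm : m ∈ I)
    (u : (i : Fin d) → Fin (n i) → F) : (Fin (n m) → F) →ₗ[F] Arr F n I where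
  toFun v := tensOn I (Function.update u m v)
  map_add' v w := by
    funext x
    simp only [tensOn_update hm, Pi.add_apply, add_mul]
  map_smul' c v := by
    funext x
    simp only [tensOn_update hm, Pi.smul_apply, smul_eq_mul, RingHom.id_apply, mul_assoc]

def tensSlice {I : Finset (Fin d)} (V : Submodule F (Arr F n I)) (m : Fin d)
    (u : (i : Fin d) → Fin (n i) → F) : Submodule F (Fin (n m) → F) :=
  if hm : m ∈ I then V.comap (tensOnUpdate hm u) else ⊤

lemma self_mem_tensSlice_iff {I : Finset (Fin d)} {V : Submodule F (Arr F n I)} {m : Fin d}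
    (hm : m ∈ I) {u : (i : Fin d) → Fin (n i) → F} :
    u m ∈ tensSlice V m u ↔ tensOn I u ∈ V := by
  rw [tensSlice, dif_pos hm, Submodule.mem_comap]
  change tensOn I (Function.update u m (u m)) ∈ V ↔ _
  rw [Function.update_eq_self]

lemma tensSlice_congr {I : Finset (Fin d)} (V : Submodule F (Arr F n I)) (m : Fin d)
    {u v : (i : Fin d) → Fin (n i) → F} (huv : ∀ i ∈ I, i ≠ m → u i = v i) :
    tensSlice V m u = tensSlice V m v := by
  unfold tensSlice
  split_ifs with hm
  · congr 1
    refine LinearMap.ext fun w => funext fun x => ?_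
    simp only [tensOnUpdate, LinearMap.coe_mk, AddHom.coe_mk, tensOn_update hm]
    congr 1
    refine prod_congr rfl fun i hi => ?_
    rw [huv i i.2 fun h => ne_of_mem_erase hi (Subtype.ext h)]
  · rfl

lemma finrank_le_add_finrank_tensSlice {I : Finset (Fin d)} {V : Submodule F (Arr F n I)} {c : ℕ}
    (hV : Module.finrank F (Arr F n I) ≤ c + Module.finrank F V) (m : Fin d)
    (u : (i : Fin d) → Fin (n i) → F) :
    Module.finrank F (Fin (n m) → F) ≤ c + Module.finrank F (tensSlice V m u) := by
  by_cases hm : m ∈ I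
  · rw [tensSlice, dif_pos hm]
    exact finrank_le_add_finrank_comap (tensOnUpdate hm u) hV
  · rw [tensSlice, dif_neg hm, finrank_top]
    omega

def tensSliceInf (L : (I : Finset (Fin d)) → Submodule F (Arr F n I)) (m : Fin d)
    (u : (i : Fin d) → Fin (n i) → F) : Submodule F (Fin (n m) → F) :=
  ({I | I.max = m} : Finset (Finset (Fin d))).inf fun I => tensSlice (L I) m u

variable {L : (I : Finset (Fin d)) → Submodule F (Arr F n I)}

lemma tensSliceInf_congr (m : Fin d) {u v : (i : Fin d) → Fin (n i) → F}
    (huv : ∀ j, j < m → u j = v j) : tensSliceInf L m u = tensSliceInf L m v := by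
  refine inf_congr rfl fun I hI => tensSlice_congr _ m fun i hi him => huv i ?_
  have hmax : I.max = m := (mem_filter.mp hI).2
  exact lt_of_le_of_ne (WithBot.coe_le_coe.mp (hmax ▸ le_max hi)) him

lemma finrank_le_add_finrank_tensSliceInf {l : ℕ}
    (hL : ∀ I : Finset (Fin d), I.Nonempty →
      Module.finrank F (Arr F n I) ≤ l + Module.finrank F (L I))
    (m : Fin d) (u : (i : Fin d) → Fin (n i) → F) :
    Module.finrank F (Fin (n m) → F) ≤ 2 ^ d * l + Module.finrank F (tensSliceInf L m u) := by
  have hcard : #({I | I.max = m} : Finset (Finset (Fin d))) ≤ 2 ^ d := by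
    simpa [Fintype.card_finset] using card_filter_le (univ : Finset (Finset (Fin d))) _
  have hinf := finrank_le_add_finrank_finset_inf ({I | I.max = m} : Finset (Finset (Fin d)))
    (fun I => tensSlice (L I) m u) fun I hI =>
      finrank_le_add_finrank_tensSlice (hL I ⟨m, mem_of_max (mem_filter.mp hI).2⟩) m u
  have hmul := Nat.mul_le_mul_right l hcard
  unfold tensSliceInf
  omega

lemma tensOn_mem_of_mem_tensSliceInf {I : Finset (Fin d)} {m : Fin d} (hI : I.max = m)
    {u : (i : Fin d) → Fin (n i) → F} (hu : u m ∈ tensSliceInf L m u) :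
    tensOn I u ∈ L I := by
  have hle : tensSliceInf L m u ≤ tensSlice (L I) m u :=
    inf_le (f := fun I => tensSlice (L I) m u) (mem_filter.mpr ⟨mem_univ I, hI⟩)
  exact (self_mem_tensSlice_iff (mem_of_max hI)).mp (hle hu)

end Slices

theorem system_meets_subspaces_general
    (F : Type*) [Field F]
    (d : ℕ) (n : Fin d → ℕ) (k l : ℕ)
    (T : Finset ((i : Fin d) → Fin (n i) → F)) (hT : IsSystemTuples (k : ℝ) T)
    (L : (I : Finset (Fin d)) → Submodule F (Arr F n I))
    (hL : ∀ I : Finset (Fin d), I.Nonempty →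
      Module.finrank F (Arr F n I) ≤ l + Module.finrank F (L I)) :
    ∃ T'' : Finset ((i : Fin d) → Fin (n i) → F),
      IsSystemTuples ((k + 2 ^ d * l : ℕ) : ℝ) T'' ∧
      T''.val.map tens ≤ T.val.map tens ∧
      ∀ u ∈ T'', tens u ∈
        ⨅ I : {I : Finset (Fin d) // I.Nonempty},
          spanTensorL (Finset.subset_univ I.1) (L I.1) := by
  classical
  refine ⟨{u ∈ T | ∀ m, u m ∈ tensSliceInf L m u}, ?_, ?_, ?_⟩
  · rw [Nat.cast_add]
    exact hT.filter_forall_mem _ tensSliceInf_congr (finrank_le_add_finrank_tensSliceInf hL)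
  · exact Multiset.map_le_map (val_le_iff.mpr (filter_subset _ T))
  · intro u hu
    rw [Submodule.mem_iInf]
    rintro ⟨I, hI⟩
    exact tens_mem_spanTensorL
      (tensOn_mem_of_mem_tensSliceInf (I.coe_max' hI).symm ((mem_filter.mp hu).2 _))

/-- If `Q` is a `k`-system and, for every nonempty `I ⊆ [d]`, `L_I ⊆ F^I` is a subspace of
codimension at most `l`, then `Q ∩ ⋂_{I≠∅}(L_I ⊗ F^{I^c})` contains a `(k + 2^d·l)`-system. -/
theorem system_meets_subspaces
    (F : Type*) [Field F] [Fintype F] [DecidableEq F]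
    (d : ℕ) (n : Fin d → ℕ) (k l : ℕ)
    (T : Finset ((i : Fin d) → Fin (n i) → F)) (hT : IsSystemTuples (k : ℝ) T)
    (L : (I : Finset (Fin d)) → Submodule F (Arr F n I))
    (hL : ∀ I : Finset (Fin d), I.Nonempty →
      Module.finrank F (Arr F n I) ≤ l + Module.finrank F (L I)) :
    ∃ T'' : Finset ((i : Fin d) → Fin (n i) → F),
      IsSystemTuples ((k + 2 ^ d * l : ℕ) : ℝ) T'' ∧
      T''.val.map tens ≤ T.val.map tens ∧
      ∀ u ∈ T'', tens u ∈
        ⨅ I : {I : Finset (Fin d) // I.Nonempty},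
          spanTensorL (Finset.subset_univ I.1) (L I.1) :=
  system_meets_subspaces_general F d n k l T hT L hL
end
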